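/- arXiv:2108.00025 — 2 statements merged into one kernel-verified Lean document; each statement's English description precedes it below -/
import Mathlib

section
/- Let A and A' be unital C*-algebras, P₁ a nontrivial symmetric projection in A, P₂ = I_A − P₁, A_{jk} = P_j A P_k, and suppose A satisfies (♠): for j ∈ {1,2}, P_j A X = {0} implies X = 0. Fix an integer n ≥ 2 and let φ: A → A' be a bijective map with φ(I_A) = I_{A'} satisfying (•): φ(p_{n*}(A,B,Ξ,…,Ξ)) = p_{n*}(φ(A),φ(B),φ(Ξ),…,φ(Ξ)) for all A, B ∈ A and Ξ ∈ {P₁, P₂, I_A}. Then for j ≠ k in {1,2} and any A_{jk}, B_{jk} ∈ A_{jk} one has φ(A_{jk} + B_{jk}) = φ(A_{jk}) + φ(B_{jk}). -/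
/-- The `*`-Lie product `[x,y]_* = xy - y x*`. -/
def starLie {R : Type*} [Ring R] [StarRing R] (x y : R) : R := x * y - y * star x

/-- `pn n a b xi = p_{n*}(a, b, xi, ..., xi)` (with `n - 2` trailing copies of `xi`). -/
def pn {R : Type*} [Ring R] [StarRing R] (n : ℕ) (a b ξ : R) : R :=
  (fun z => starLie z ξ)^[n - 2] (starLie a b)

/-!
Write `f = 1 - e`, `X = e x f` and `Y = e y f`. As `φ` is bijective, it suffices that the preimage
`t` of `φ X + φ Y` is `X + Y`. If `L` is additive and `φ ∘ L = M ∘ φ` with `M` additive, then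
`φ (L t) = φ (L X) + φ (L Y)`, which is `φ (L (X + Y))` as soon as
`φ (L X + L Y) = φ (L X) + φ (L Y)`, e.g. when `L X = 0` or `L Y = 0`; a family of such `L` that
separates points then forces `t = X + Y`.

For `n ≥ 3` the maps `b ↦ p_n(f z, b, e)` and `b ↦ p_n(e z f, b, f)` vanish on `e A f` and, by (♠),
detect `b e` and `f b f`, while `p_n(e, b, f) = e b f - (e b f)*`. The one remaining input,
`φ ((X - X*) + (Y - Y*)) = φ (X - X*) + φ (Y - Y*)`, is `φ (X + f) = φ X + φ f` pushed through
`b ↦ p_n(e + Y, b, f)`.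

For `n ≤ 2`, `p_n` is the `*`-Lie product, and the bracket with the skew element `i (e - f)`, which
kills the off-diagonal corners and detects the diagonal ones, gives additivity across distinct
corners. Pushing `φ (Y + e) = φ Y + φ e` through `a ↦ [a, X + f]_*` yields
`φ (X + Y + Q + Z) = φ X + φ (Y + Q + Z)` with `Q = -Y*` and `Z = -X Y*` in other corners, and
these cancel.
-/

open Function

section StarLie

variable {R : Type*} [Ring R] [StarRing R]

def starLieLeft (a : R) : R →+ R where
  toFun := starLie a
  map_zero' := by simp [starLie]
  map_add' x y := by simp only [starLie, mul_add, add_mul]; abel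

def starLieRight (b : R) : R →+ R where
  toFun x := starLie x b
  map_zero' := by simp [starLie]
  map_add' x y := by simp only [starLie, add_mul, star_add, mul_add]; abel

@[simp] theorem starLieLeft_apply (a x : R) : starLieLeft a x = starLie a x := rfl

@[simp] theorem starLieRight_apply (b x : R) : starLieRight b x = starLie x b := rfl

theorem starLie_eq_of_isSelfAdjoint {ξ : R} (hξ : IsSelfAdjoint ξ) (z : R) :
    starLie z ξ = z * ξ - star (z * ξ) := by
  rw [starLie, star_mul, hξ.star_eq]

theorem starLie_eq_sub_star {z ξ V : R} (hξ : IsSelfAdjoint ξ) (h : z * ξ = V) :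
    starLie z ξ = V - star V := by
  rw [starLie_eq_of_isSelfAdjoint hξ, h]

theorem mul_starLie_mul {η ξ : R} (hξ : IsStarProjection ξ) (hηξ : η * ξ = 0) (z : R) :
    η * starLie z ξ * ξ = η * z * ξ := by
  rw [starLie_eq_of_isSelfAdjoint hξ.isSelfAdjoint, star_mul, hξ.isSelfAdjoint.star_eq, mul_sub,
    sub_mul, ← mul_assoc η ξ, hηξ, zero_mul, zero_mul, sub_zero, ← mul_assoc,
    hξ.isIdempotentElem.mul_mul_self]

theorem pn_eq_iterate (n : ℕ) (a b ξ : R) :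
    pn n a b ξ = (starLieRight ξ)^[n - 2] (starLie a b) := rfl

theorem pn_eq_starLie {n : ℕ} (hn : n ≤ 2) (a b ξ : R) : pn n a b ξ = starLie a b := by
  rw [pn, Nat.sub_eq_zero_of_le hn, iterate_zero, id]

theorem pn_eq_of_starLie_starLie_eq {n : ℕ} (hn : 3 ≤ n) {a b ξ w : R}
    (h : starLie (starLie a b) ξ = w) (hw : starLie w ξ = w) : pn n a b ξ = w := by
  obtain ⟨k, hk⟩ : ∃ k, n - 2 = k + 1 := ⟨n - 3, by omega⟩
  rw [pn, hk, iterate_succ_apply, h]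
  exact iterate_fixed hw k

theorem pn_eq_zero_of_mul_eq_zero {n : ℕ} (hn : 3 ≤ n) {a b ξ : R} (hξ : IsSelfAdjoint ξ)
    (hab : a * b * ξ = 0) (ha : star a * ξ = 0) : pn n a b ξ = 0 := by
  refine pn_eq_of_starLie_starLie_eq hn ?_ (map_zero (starLieRight ξ))
  rw [starLie_eq_sub_star hξ (V := 0), star_zero, sub_zero]
  rw [starLie, sub_mul, hab, mul_assoc, ha, mul_zero, sub_zero]

theorem pn_eq_sub_star {n : ℕ} (hn : 3 ≤ n) {a b ξ V : R} (hξ : IsSelfAdjoint ξ)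
    (hab : starLie a b * ξ = V) (hV : (V - star V) * ξ = V) : pn n a b ξ = V - star V :=
  pn_eq_of_starLie_starLie_eq hn (starLie_eq_sub_star hξ hab) (starLie_eq_sub_star hξ hV)

def pnLeft (n : ℕ) (a ξ : R) : R →+ R where
  toFun b := pn n a b ξ
  map_zero' := by rw [pn_eq_iterate, ← starLieLeft_apply, map_zero, iterate_map_zero]
  map_add' x y := by simp only [pn_eq_iterate, ← starLieLeft_apply, map_add, iterate_map_add]

@[simp] theorem pnLeft_apply (n : ℕ) (a ξ b : R) : pnLeft n a ξ b = pn n a b ξ := rfl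

theorem pn_zero_left (n : ℕ) (b ξ : R) : pn n 0 b ξ = 0 := by
  rw [pn_eq_iterate, ← starLieRight_apply b, map_zero, iterate_map_zero]

theorem pn_add_left (n : ℕ) (a a' b ξ : R) :
    pn n (a + a') b ξ = pn n a b ξ + pn n a' b ξ := by
  simp only [pn_eq_iterate, ← starLieRight_apply b, map_add, iterate_map_add]

theorem mul_pn_mul (n : ℕ) {η ξ : R} (hξ : IsStarProjection ξ) (hηξ : η * ξ = 0) (a b : R) :
    η * pn n a b ξ * ξ = η * starLie a b * ξ := by
  rw [pn_eq_iterate]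
  induction n - 2 with
  | zero => rfl
  | succ k ih => rw [iterate_succ_apply', starLieRight_apply, mul_starLie_mul hξ hηξ, ih]

end StarLie

section Transport

variable {R S : Type*} {φ : R → S}

theorem map_zero_of_map_op [Zero R] [Zero S] {F : R → R → R} {G : S → S → S}
    (hφ : Surjective φ) (hmap : ∀ a b, φ (F a b) = G (φ a) (φ b))
    (hF : ∀ a, F a 0 = 0) (hG : ∀ s, G 0 s = 0) : φ 0 = 0 := by
  obtain ⟨a, ha⟩ := hφ 0
  rw [← hF a, hmap, ha, hG]

theorem map_add_of_eq_zero_or [AddZeroClass R] [AddZeroClass S] (h0 : φ 0 = 0) {a b : R}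
    (h : a = 0 ∨ b = 0) : φ (a + b) = φ a + φ b := by
  rcases h with rfl | rfl <;> simp [h0]

theorem map_add_comp_of_map_add [AddZeroClass R] [AddZeroClass S] {L : R →+ R} {M : S →+ S}
    (hLM : ∀ x, φ (L x) = M (φ x)) {x y : R} (h : φ (x + y) = φ x + φ y) :
    φ (L x + L y) = φ (L x) + φ (L y) := by
  rw [← map_add, hLM, h, map_add, hLM, hLM]

theorem map_add_of_separating [AddGroup R] [AddZeroClass S] (hφ : Bijective φ)
    {D : Set (R →+ R)} (hD : ∀ L ∈ D, ∃ M : S →+ S, ∀ x, φ (L x) = M (φ x))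
    (hsep : ∀ d, (∀ L ∈ D, L d = 0) → d = 0) {x y : R}
    (hxy : ∀ L ∈ D, φ (L x + L y) = φ (L x) + φ (L y)) : φ (x + y) = φ x + φ y := by
  obtain ⟨t, ht⟩ := hφ.2 (φ x + φ y)
  have htxy : t = x + y := by
    refine sub_eq_zero.1 (hsep _ fun L hL => ?_)
    obtain ⟨M, hLM⟩ := hD L hL
    rw [map_sub, sub_eq_zero]
    exact hφ.1 (by rw [hLM, ht, map_add, ← hLM, ← hLM, ← hxy L hL, map_add])
  rw [← htxy, ht]

theorem map_zero_of_map_starLie [Ring R] [StarRing R] [Ring S] [StarRing S] (hφ : Surjective φ)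
    (hmap : ∀ a b, φ (starLie a b) = starLie (φ a) (φ b)) : φ 0 = 0 :=
  map_zero_of_map_op hφ hmap (fun a => map_zero (starLieLeft a))
    (fun s => map_zero (starLieRight s))

end Transport

section Peirce

variable {R : Type*} [Ring R] {e f : R}

theorem IsIdempotentElem.mul_mul_mul_mul (he : IsIdempotentElem e) (hf : IsIdempotentElem f)
    (x : R) : e * (e * x * f) * f = e * x * f := by
  rw [← mul_assoc, ← mul_assoc, he.eq, mul_assoc, hf.eq]

theorem eq_zero_of_corners_eq_zero (hef : e + f = 1) {d : R} (hee : e * d * e = 0)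
    (hef' : e * d * f = 0) (hfe : f * d * e = 0) (hff : f * d * f = 0) : d = 0 := by
  calc d = (e + f) * d * (e + f) := by rw [hef, one_mul, mul_one]
    _ = 0 := by simp only [add_mul, mul_add, hee, hef', hfe, hff, add_zero]

variable [StarRing R]

theorem IsStarProjection.of_add_eq_one (he : IsStarProjection e) (hef : e + f = 1) :
    IsStarProjection f := by
  rw [eq_sub_of_add_eq' hef]
  exact he.one_sub

theorem IsStarProjection.mul_eq_zero_of_add_eq_one (he : IsStarProjection e) (hef : e + f = 1) :
    e * f = 0 := by
  rw [eq_sub_of_add_eq' hef, he.mul_one_sub_self]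

theorem IsStarProjection.mul_eq_zero_of_add_eq_one' (he : IsStarProjection e)
    (hef : e + f = 1) : f * e = 0 := by
  rw [eq_sub_of_add_eq' hef, he.one_sub_mul_self]

theorem starLie_proj_corner (he : IsStarProjection e) (z : R) : starLie e (e * z * e) = 0 := by
  rw [starLie, he.isSelfAdjoint.star_eq, ← mul_assoc, ← mul_assoc, he.isIdempotentElem.eq,
    he.isIdempotentElem.mul_mul_self, sub_self]

theorem starLie_corner_proj (hse : IsSelfAdjoint e) (hfe : f * e = 0) (v : R) :
    starLie (e * v * f) e = 0 := by
  rw [starLie_eq_sub_star hse (V := 0) (by rw [mul_assoc, hfe, mul_zero]), star_zero, sub_zero]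

theorem starLie_proj_corner_add (he : IsStarProjection e) (hef : e + f = 1) (x : R) :
    starLie e (e * x * f + f) = e * x * f := by
  obtain rfl := eq_sub_of_add_eq' hef
  simp only [starLie, mul_sub, sub_mul, mul_add, add_mul, mul_one, one_mul, mul_assoc,
    he.isIdempotentElem.eq, he.isIdempotentElem.mul_self_mul, he.isSelfAdjoint.star_eq]
  abel

theorem starLie_corner_corner_add (he : IsStarProjection e) (hef : e + f = 1) (x y : R) :
    starLie (e * y * f) (e * x * f + f) =
      e * y * f + f * (-star y) * e + e * (-(x * f * star y)) * e := by
  obtain rfl := eq_sub_of_add_eq' hef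
  simp only [starLie, mul_sub, sub_mul, mul_add, add_mul, mul_one, one_mul, mul_assoc, mul_neg,
    neg_mul, star_mul, star_sub, he.isIdempotentElem.eq, he.isIdempotentElem.mul_self_mul,
    he.isSelfAdjoint.star_eq]
  abel

end Peirce

section PnPreserving

variable {R S : Type*} [Ring R] [StarRing R] [Ring S] [StarRing S] {e f : R} {n : ℕ}

theorem pn_compl_mul_corner (hn : 3 ≤ n) (he : IsStarProjection e) (hef : e + f = 1)
    (z x : R) : pn n (f * z) (e * x * f) e = 0 := by
  obtain rfl := eq_sub_of_add_eq' hef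
  refine pn_eq_zero_of_mul_eq_zero hn he.isSelfAdjoint ?_ ?_ <;>
    simp only [mul_sub, sub_mul, mul_one, one_mul, mul_assoc, star_sub, star_mul,
      he.isIdempotentElem.eq, he.isSelfAdjoint.star_eq] <;>
    abel

theorem pn_corner_corner (hn : 3 ≤ n) (he : IsStarProjection e) (hef : e + f = 1)
    (z x : R) : pn n (e * z * f) (e * x * f) f = 0 := by
  obtain rfl := eq_sub_of_add_eq' hef
  refine pn_eq_zero_of_mul_eq_zero hn he.one_sub.isSelfAdjoint ?_ ?_ <;>
    simp only [mul_sub, sub_mul, mul_one, mul_assoc, star_sub, star_mul,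
      he.isIdempotentElem.eq, he.isIdempotentElem.mul_self_mul, he.isSelfAdjoint.star_eq] <;>
    abel

theorem pn_proj_compl (hn : 3 ≤ n) (he : IsStarProjection e) (hef : e + f = 1) (b : R) :
    pn n e b f = e * b * f - star (e * b * f) := by
  obtain rfl := eq_sub_of_add_eq' hef
  refine pn_eq_sub_star hn he.one_sub.isSelfAdjoint ?_ ?_ <;>
    simp only [starLie, mul_sub, sub_mul, mul_one, mul_assoc, star_sub, star_mul,
      he.isIdempotentElem.eq, he.isSelfAdjoint.star_eq] <;>
    abel

theorem pn_corner_compl_compl (hn : 3 ≤ n) (he : IsStarProjection e) (hef : e + f = 1)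
    (x : R) : pn n (e * x * f) f f = e * x * f - star (e * x * f) := by
  obtain rfl := eq_sub_of_add_eq' hef
  refine pn_eq_sub_star hn he.one_sub.isSelfAdjoint ?_ ?_ <;>
    simp only [starLie, mul_sub, sub_mul, mul_one, one_mul, mul_assoc, star_sub,
      star_mul, he.isIdempotentElem.eq, he.isIdempotentElem.mul_self_mul,
      he.isSelfAdjoint.star_eq] <;>
    abel

def pnSeparatingFamily (n : ℕ) (e f : R) : Set (R →+ R) :=
  Set.range (fun z => pnLeft n (f * z) e) ∪ Set.range (fun z => pnLeft n (e * z * f) f) ∪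
    {pnLeft n e f}

theorem eq_zero_of_forall_mem_pnSeparatingFamily (hn : 3 ≤ n) (he : IsStarProjection e)
    (hef : e + f = 1) (hspe : ∀ d, (∀ z, e * z * d = 0) → d = 0)
    (hspf : ∀ d, (∀ z, f * z * d = 0) → d = 0) (d : R)
    (hd : ∀ L ∈ pnSeparatingFamily n e f, L d = 0) : d = 0 := by
  have hf := he.of_add_eq_one hef
  have hfe := he.mul_eq_zero_of_add_eq_one' hef
  have hef₀ := he.mul_eq_zero_of_add_eq_one hef
  have hde : d * e = 0 := hspf _ fun z => by
    simpa [mul_pn_mul n he hfe, starLie, mul_sub, sub_mul, mul_assoc, hf.isSelfAdjoint.star_eq,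
      hf.isIdempotentElem.mul_self_mul, hfe] using congr(f * $(hd _ (.inl (.inl ⟨z, rfl⟩))) * e)
  have hfdf : f * d * f = 0 := hspe _ fun z => by
    simpa [mul_pn_mul n hf hef₀, starLie, mul_sub, sub_mul, mul_assoc, he.isSelfAdjoint.star_eq,
      hf.isSelfAdjoint.star_eq, he.isIdempotentElem.mul_self_mul, hef₀]
      using congr(e * $(hd _ (.inl (.inr ⟨z, rfl⟩))) * f)
  have hedf : e * d * f = 0 := by
    simpa [pn_proj_compl hn he hef, mul_sub, sub_mul, mul_assoc, he.isSelfAdjoint.star_eq,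
      hf.isSelfAdjoint.star_eq, he.isIdempotentElem.mul_self_mul,
      hf.isIdempotentElem.mul_mul_self, hef₀] using congr(e * $(hd _ (.inr rfl)) * f)
  refine eq_zero_of_corners_eq_zero hef ?_ hedf ?_ hfdf <;> rw [mul_assoc, hde, mul_zero]

theorem eq_or_apply_corner_eq_zero_of_mem_pnSeparatingFamily (hn : 3 ≤ n)
    (he : IsStarProjection e) (hef : e + f = 1) (x : R) :
    ∀ L ∈ pnSeparatingFamily n e f, L = pnLeft n e f ∨ L (e * x * f) = 0 := by
  rintro L ((⟨z, rfl⟩ | ⟨z, rfl⟩) | rfl)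
  exacts [.inr (pn_compl_mul_corner hn he hef z x), .inr (pn_corner_corner hn he hef z x),
    .inl rfl]

theorem map_add_corner_of_map_pn (hn : 3 ≤ n) (he : IsStarProjection e)
    (hef : e + f = 1) (hspe : ∀ d, (∀ z, e * z * d = 0) → d = 0)
    (hspf : ∀ d, (∀ z, f * z * d = 0) → d = 0) {φ : R → S} (hφ : Bijective φ)
    (hmap : ∀ ξ ∈ ({e, f} : Set R), ∀ a b, φ (pn n a b ξ) = pn n (φ a) (φ b) (φ ξ))
    (x y : R) : φ (e * x * f + e * y * f) = φ (e * x * f) + φ (e * y * f) := by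
  have h0 : φ 0 = 0 := map_zero_of_map_op (F := (pn n · · e)) (G := (pn n · · (φ e))) hφ.2
    (hmap e (.inl rfl)) (fun a => map_zero (pnLeft n a e)) (fun s => pn_zero_left n s _)
  have hD : ∀ L ∈ pnSeparatingFamily n e f, ∃ M : S →+ S, ∀ x, φ (L x) = M (φ x) := by
    rintro L ((⟨z, rfl⟩ | ⟨z, rfl⟩) | rfl)
    exacts [⟨pnLeft n (φ (f * z)) (φ e), hmap e (.inl rfl) _⟩,
      ⟨pnLeft n (φ (e * z * f)) (φ f), hmap f (.inr rfl) _⟩,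
      ⟨pnLeft n (φ e) (φ f), hmap f (.inr rfl) _⟩]
  have hsep := eq_zero_of_forall_mem_pnSeparatingFamily hn he hef hspe hspf
  have hcorner := eq_or_apply_corner_eq_zero_of_mem_pnSeparatingFamily hn he hef
  have hf := he.of_add_eq_one hef
  have hXf : φ (e * x * f + f) = φ (e * x * f) + φ f :=
    map_add_of_separating hφ hD hsep fun L hL => by
      refine map_add_of_eq_zero_or h0 ((hcorner x L hL).imp_left fun hL => ?_).symm
      simp [hL, pn_proj_compl hn he hef, he.mul_eq_zero_of_add_eq_one hef]
  have hstar : φ ((e * x * f - star (e * x * f)) + (e * y * f - star (e * y * f))) =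
      φ (e * x * f - star (e * x * f)) + φ (e * y * f - star (e * y * f)) := by
    simpa only [pnLeft_apply, pn_add_left, pn_proj_compl hn he hef, pn_corner_corner hn he hef,
      pn_corner_compl_compl hn he hef, he.mul_eq_zero_of_add_eq_one hef, zero_mul, star_zero,
      sub_zero, add_zero, zero_add, he.isIdempotentElem.mul_mul_mul_mul hf.isIdempotentElem]
      using map_add_comp_of_map_add (L := pnLeft n (e + e * y * f) f)
        (M := pnLeft n (φ (e + e * y * f)) (φ f)) (hmap f (.inr rfl) _) hXf
  refine map_add_of_separating hφ hD hsep fun L hL => ?_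
  rcases hcorner x L hL with rfl | hLx
  · simpa only [pnLeft_apply, pn_proj_compl hn he hef,
      he.isIdempotentElem.mul_mul_mul_mul hf.isIdempotentElem] using hstar
  · exact map_add_of_eq_zero_or h0 (.inl hLx)

end PnPreserving

section StarLiePreserving

open Complex

variable {R S : Type*} [Ring R] [StarRing R] [Algebra ℂ R] [StarModule ℂ R] [Ring S] [StarRing S]
  {e f : R}

theorem starLie_I_smul {a : R} (ha : IsSelfAdjoint a) (d : R) :
    starLie (I • a) d = I • (a * d + d * a) := by
  rw [starLie, star_smul, ha.star_eq, star_def, conj_I, smul_mul_assoc, mul_smul_comm, neg_smul,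
    sub_neg_eq_add, smul_add]

theorem starLie_I_smul_offDiag (he : IsStarProjection e) (hef : e + f = 1) (v q : R) :
    starLie (I • (e - f)) (e * v * f + f * q * e) = 0 := by
  rw [starLie_I_smul (he.isSelfAdjoint.sub (he.of_add_eq_one hef).isSelfAdjoint)]
  obtain rfl := eq_sub_of_add_eq' hef
  simp only [mul_sub, sub_mul, mul_add, add_mul, mul_one, one_mul, mul_assoc,
    he.isIdempotentElem.eq, he.isIdempotentElem.mul_self_mul]
  rw [← smul_zero I]
  congr 1
  abel

theorem corners_eq_zero_of_starLie_I_smul_eq_zero (he : IsStarProjection e) (hef : e + f = 1)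
    {d : R} (h : starLie (I • (e - f)) d = 0) : e * d * e = 0 ∧ f * d * f = 0 := by
  rw [starLie_I_smul (he.isSelfAdjoint.sub (he.of_add_eq_one hef).isSelfAdjoint), smul_eq_zero,
    or_iff_right I_ne_zero] at h
  have h2 : ∀ w : R, w + w = 0 → w = 0 := fun w hw => by
    rwa [← two_smul ℂ, smul_eq_zero, or_iff_right two_ne_zero] at hw
  obtain rfl := eq_sub_of_add_eq' hef
  constructor
  · refine h2 _ (Eq.trans ?_ (by simpa using congr(e * $h * e)))
    simp only [mul_sub, sub_mul, mul_add, add_mul, mul_one, one_mul, mul_assoc,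
      he.isIdempotentElem.eq, he.isIdempotentElem.mul_self_mul]
    abel
  · refine neg_eq_zero.1 (h2 _ (Eq.trans ?_ (by simpa using congr((1 - e) * $h * (1 - e)))))
    simp only [mul_sub, sub_mul, mul_add, add_mul, mul_one, one_mul, mul_assoc,
      he.isIdempotentElem.eq, he.isIdempotentElem.mul_self_mul]
    abel

theorem eq_zero_of_starLie_proj_eq_zero (he : IsStarProjection e) (hef : e + f = 1) {d : R}
    (h₁ : starLie e d = 0) (h₂ : starLie (I • (e - f)) d = 0) : d = 0 := by
  obtain ⟨hede, hfdf⟩ := corners_eq_zero_of_starLie_I_smul_eq_zero he hef h₂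
  have hcomm : e * d = d * e := by
    rwa [starLie, he.isSelfAdjoint.star_eq, sub_eq_zero] at h₁
  refine eq_zero_of_corners_eq_zero hef hede ?_ ?_ hfdf
  · rw [hcomm, mul_assoc, he.mul_eq_zero_of_add_eq_one hef, mul_zero]
  · rw [mul_assoc, ← hcomm, ← mul_assoc, he.mul_eq_zero_of_add_eq_one' hef, zero_mul]

theorem eq_zero_of_starLie_eq_zero_proj (he : IsStarProjection e) (hef : e + f = 1) {d : R}
    (h₁ : starLie (I • (e - f)) d = 0) (h₂ : starLie d e = 0) (h₃ : starLie d f = 0) :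
    d = 0 := by
  obtain ⟨hede, hfdf⟩ := corners_eq_zero_of_starLie_I_smul_eq_zero he hef h₁
  refine eq_zero_of_corners_eq_zero hef hede ?_ ?_ hfdf
  · rw [← mul_starLie_mul (he.of_add_eq_one hef) (he.mul_eq_zero_of_add_eq_one hef), h₃,
      mul_zero, zero_mul]
  · rw [← mul_starLie_mul he (he.mul_eq_zero_of_add_eq_one' hef), h₂, mul_zero, zero_mul]

variable {φ : R → S}

theorem map_add_offDiag_of_map_starLie (he : IsStarProjection e) (hef : e + f = 1)
    (hφ : Bijective φ) (hmap : ∀ a b, φ (starLie a b) = starLie (φ a) (φ b)) (v q : R) :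
    φ (e * v * f + f * q * e) = φ (e * v * f) + φ (f * q * e) := by
  have h0 := map_zero_of_map_starLie hφ.2 hmap
  refine map_add_of_separating hφ (D := {starLieLeft (I • (e - f)), starLieRight e,
    starLieRight f}) ?_ (fun d hd => ?_) ?_
  · rintro L (rfl | rfl | rfl)
    exacts [⟨starLieLeft (φ _), hmap _⟩, ⟨starLieRight (φ e), (hmap · e)⟩,
      ⟨starLieRight (φ f), (hmap · f)⟩]
  · exact eq_zero_of_starLie_eq_zero_proj he hef (hd _ (.inl rfl)) (hd _ (.inr (.inl rfl)))
      (hd _ (.inr (.inr rfl)))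
  · rintro L (rfl | rfl | rfl) <;> refine map_add_of_eq_zero_or h0 ?_
    · refine .inl ?_
      simpa only [starLieLeft_apply, mul_zero, zero_mul, add_zero] using
        starLie_I_smul_offDiag he hef v 0
    · exact .inl (starLie_corner_proj he.isSelfAdjoint (he.mul_eq_zero_of_add_eq_one' hef) v)
    · exact .inr (starLie_corner_proj (he.of_add_eq_one hef).isSelfAdjoint
        (he.mul_eq_zero_of_add_eq_one hef) q)

theorem map_add_offDiag_add_diag_of_map_starLie (he : IsStarProjection e) (hef : e + f = 1)
    (hφ : Bijective φ) (hmap : ∀ a b, φ (starLie a b) = starLie (φ a) (φ b)) (v q z : R) :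
    φ (e * v * f + f * q * e + e * z * e) = φ (e * v * f) + φ (f * q * e) + φ (e * z * e) := by
  rw [← map_add_offDiag_of_map_starLie he hef hφ hmap]
  refine map_add_of_separating hφ (D := {starLieLeft e, starLieLeft (I • (e - f))}) ?_
    (fun d hd => eq_zero_of_starLie_proj_eq_zero he hef (hd _ (.inl rfl)) (hd _ (.inr rfl))) ?_
  · rintro L (rfl | rfl) <;> exact ⟨starLieLeft (φ _), hmap _⟩
  · rintro L (rfl | rfl) <;> refine map_add_of_eq_zero_or (map_zero_of_map_starLie hφ.2 hmap) ?_
    exacts [.inr (starLie_proj_corner he z), .inl (starLie_I_smul_offDiag he hef v q)]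

theorem map_add_corner_of_map_starLie (he : IsStarProjection e) (hef : e + f = 1)
    (hφ : Bijective φ) (hmap : ∀ a b, φ (starLie a b) = starLie (φ a) (φ b)) (x y : R) :
    φ (e * x * f + e * y * f) = φ (e * x * f) + φ (e * y * f) := by
  have hdiag := map_add_offDiag_add_diag_of_map_starLie he hef hφ hmap
  have hYe : φ (e * y * f + e) = φ (e * y * f) + φ e := by
    simpa [map_zero_of_map_starLie hφ.2 hmap, he.isIdempotentElem.eq] using hdiag y 0 1
  have key := map_add_comp_of_map_add (L := starLieRight (e * x * f + f))
    (M := starLieRight (φ (e * x * f + f))) (fun w => hmap w _) hYe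
  rw [starLieRight_apply, starLieRight_apply, starLie_proj_corner_add he hef,
    starLie_corner_corner_add he hef, hdiag, show ∀ q z : R, e * y * f + q + z + e * x * f =
      e * (x + y) * f + q + z by intro q z; noncomm_ring, hdiag] at key
  rw [← add_mul, ← mul_add, add_comm (φ (e * x * f))]
  exact add_right_cancel (add_right_cancel (key.trans (by abel)))

end StarLiePreserving

variable {A A' : Type*}
  [NormedRing A] [StarRing A] [CStarRing A] [NormedAlgebra ℂ A]
  [CompleteSpace A] [StarModule ℂ A]
  [NormedRing A'] [StarRing A'] [CStarRing A'] [NormedAlgebra ℂ A']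
  [CompleteSpace A'] [StarModule ℂ A']

theorem stmt7_general
    (P₁ : A) (hP₁proj : P₁ * P₁ = P₁) (hP₁star : star P₁ = P₁)
    (P₂ : A) (hP₂ : P₂ = 1 - P₁)
    (hspade : ∀ Pj ∈ ({P₁, P₂} : Set A), ∀ X : A, (∀ Y : A, Pj * Y * X = 0) → X = 0)
    (n : ℕ)
    (φ : A → A') (hbij : Function.Bijective φ)
    (hbullet : ∀ a b : A, ∀ Ξ ∈ ({P₁, P₂, 1} : Set A),
      φ (pn n a b Ξ) = pn n (φ a) (φ b) (φ Ξ))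
    :
    ∀ Pj Pk : A, (Pj = P₁ ∧ Pk = P₂) ∨ (Pj = P₂ ∧ Pk = P₁) →
      ∀ a b : A, (∃ x : A, a = Pj * x * Pk) → (∃ y : A, b = Pj * y * Pk) →
        φ (a + b) = φ a + φ b := by
  have hcorner : ∀ e f, IsStarProjection e → e + f = 1 → e ∈ ({P₁, P₂} : Set A) →
      f ∈ ({P₁, P₂} : Set A) →
      ∀ x y, φ (e * x * f + e * y * f) = φ (e * x * f) + φ (e * y * f) := by
    intro e f he hef heP hfP x y
    rcases le_or_gt n 2 with hn | hn
    · refine map_add_corner_of_map_starLie he hef hbij (fun a b => ?_) x y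
      simpa only [pn_eq_starLie hn] using hbullet a b 1 (by simp)
    · have hsub : ({P₁, P₂} : Set A) ⊆ {P₁, P₂, 1} :=
        Set.insert_subset_insert (Set.singleton_subset_iff.2 (Set.mem_insert _ _))
      refine map_add_corner_of_map_pn hn he hef (hspade e heP) (hspade f hfP) hbij
        (fun ξ hξ a b => hbullet a b ξ ?_) x y
      rcases hξ with rfl | rfl
      exacts [hsub heP, hsub hfP]
  have hP₁ : IsStarProjection P₁ := ⟨hP₁proj, hP₁star⟩
  subst hP₂
  rintro Pj Pk (⟨rfl, rfl⟩ | ⟨rfl, rfl⟩) a b ⟨x, rfl⟩ ⟨y, rfl⟩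
  · exact hcorner _ _ hP₁ (add_sub_cancel _ _) (by simp) (by simp) x y
  · exact hcorner _ _ hP₁.one_sub (sub_add_cancel _ _) (by simp) (by simp) x y

theorem stmt7
    (P₁ : A) (hP₁proj : P₁ * P₁ = P₁) (hP₁star : star P₁ = P₁)
    (hP₁ne0 : P₁ ≠ 0) (hP₁ne1 : P₁ ≠ 1)
    (P₂ : A) (hP₂ : P₂ = 1 - P₁)
    (hspade : ∀ Pj ∈ ({P₁, P₂} : Set A), ∀ X : A, (∀ Y : A, Pj * Y * X = 0) → X = 0)
    (n : ℕ) (hn : 2 ≤ n)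
    (φ : A → A') (hbij : Function.Bijective φ) (hunit : φ 1 = 1)
    (hbullet : ∀ a b : A, ∀ Ξ ∈ ({P₁, P₂, 1} : Set A),
      φ (pn n a b Ξ) = pn n (φ a) (φ b) (φ Ξ))
    :
    ∀ Pj Pk : A, (Pj = P₁ ∧ Pk = P₂) ∨ (Pj = P₂ ∧ Pk = P₁) →
      ∀ a b : A, (∃ x : A, a = Pj * x * Pk) → (∃ y : A, b = Pj * y * Pk) →
        φ (a + b) = φ a + φ b :=
  stmt7_general P₁ hP₁proj hP₁star P₂ hP₂ hspade n φ hbij hbullet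
end

section
/- Let A and A' be unital C*-algebras, P₁ a nontrivial symmetric projection in A, P₂ = I_A − P₁, A_{jk} = P_j A P_k, and suppose A satisfies (♠): for j ∈ {1,2}, P_j A X = {0} implies X = 0. Fix an integer n ≥ 2 and let φ: A → A' be a bijective map with φ(I_A) = I_{A'}, φ(λA) = λφ(A) for all λ ∈ ℂ, satisfying (•): φ(p_{n*}(A,B,Ξ,…,Ξ)) = p_{n*}(φ(A),φ(B),φ(Ξ),…,φ(Ξ)) for all A, B ∈ A and Ξ ∈ {P₁, P₂, I_A}. Then for j ≠ k in {1,2}, any A_{jk} ∈ A_{jk} and B_{kk} ∈ A_{kk} satisfy φ(A_{jk} B_{kk}) = φ(A_{jk})φ(B_{kk}). -/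
/-!
For `Ξ = I` the polynomial `p_{n*}(A, B, I, …, I)` is `2^{n-3} [A, B + B*]_*` when `n ≥ 3`, and
`[A, B]_*` when `n = 2`; either way `φ` preserves `[A, H]_* = AH - HA*` for every self-adjoint `H`.
Since `φ` is only homogeneous, every further identity comes from evaluating at `A` and at `iA`:
this gives `φ(AH + HA*) = φ(A)φ(H) + φ(H)φ(A)*` as well, hence `φ(A ± A*) = φ(A) ± φ(A)*` and
`φ(A*) = φ(A)*`. Testing the two identities on `P_j`, `P_k` and the corner elements gives
`φ(P_j)φ(P_k) = 0`, `φ(B_kk) = φ(P_k)φ(B_kk)` and `φ(A_jk)* = (φ(A_jk) + φ(A_jk)*)φ(P_j)`, and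
finally `φ(A_jk B_kk) = (φ(A_jk) + φ(A_jk)*)φ(B_kk) = φ(A_jk)φ(B_kk)`.
-/

open Complex

section StarLie

variable {R : Type*} [Ring R] [StarRing R]

lemma starLie_one (z : R) : starLie z 1 = z - star z := by
  simp [starLie]

lemma starLie_starLie_one (u v : R) : starLie (starLie u v) 1 = starLie u (v + star v) := by
  rw [starLie_one]
  simp only [starLie, star_sub, star_mul, star_star, mul_add, add_mul]
  abel

lemma pn_two (a b ξ : R) : pn 2 a b ξ = starLie a b :=
  rfl

variable [Algebra ℂ R] [StarModule ℂ R]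

lemma starLie_I_smul_s13 (u h : R) : starLie (I • u) h = I • (u * h + h * star u) := by
  simp only [starLie, star_smul, star_def, conj_I, smul_mul_assoc, mul_smul_comm,
    neg_smul, mul_neg, sub_neg_eq_add, smul_add]

lemma iterate_starLie_one_succ (m : ℕ) (z : R) :
    (fun w => starLie w 1)^[m + 1] z = (2 : ℂ) ^ m • starLie z 1 := by
  induction m with
  | zero => simp
  | succ m ih =>
    rw [Function.iterate_succ_apply', ih, starLie_one, starLie_one, star_smul, star_sub, star_star]
    simp only [star_pow, star_ofNat]
    module

lemma pn_add_three_one (m : ℕ) (a b : R) :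
    pn (m + 3) a b 1 = (2 : ℂ) ^ m • starLie (starLie a b) 1 := by
  rw [pn, show m + 3 - 2 = m + 1 by omega, iterate_starLie_one_succ]

lemma smul_two_inv_add_star {h : R} (hh : IsSelfAdjoint h) :
    (2⁻¹ : ℂ) • h + star ((2⁻¹ : ℂ) • h) = h := by
  rw [star_smul, hh.star_eq, star_inv₀, star_ofNat]
  module

end StarLie

section StarLiePreserving

variable {A B : Type*} [Ring A] [StarRing A] [Algebra ℂ A] [Ring B] [StarRing B] [Algebra ℂ B]

structure IsStarLiePreserving (φ : A → B) : Prop where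
  map_one : φ 1 = 1
  map_smul : ∀ (c : ℂ) (a : A), φ (c • a) = c • φ a
  map_starLie : ∀ a h, IsSelfAdjoint h → φ (starLie a h) = starLie (φ a) (φ h)

namespace IsStarLiePreserving

variable {φ : A → B}

theorem map_zero (hφ : IsStarLiePreserving φ) : φ 0 = 0 := by
  simpa using hφ.map_smul 0 0

theorem map_neg (hφ : IsStarLiePreserving φ) (a : A) : φ (-a) = -φ a := by
  simpa using hφ.map_smul (-1) a

theorem map_mul_sub_mul_star (hφ : IsStarLiePreserving φ) (a : A) {h : A} (hh : IsSelfAdjoint h) :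
    φ (a * h - h * star a) = φ a * φ h - φ h * star (φ a) :=
  hφ.map_starLie a h hh

theorem map_sub_star (hφ : IsStarLiePreserving φ) (a : A) : φ (a - star a) = φ a - star (φ a) := by
  simpa [hφ.map_one] using hφ.map_mul_sub_mul_star a (.one A)

variable [StarModule ℂ A] [StarModule ℂ B]

theorem map_mul_add_mul_star (hφ : IsStarLiePreserving φ) (a : A) {h : A} (hh : IsSelfAdjoint h) :
    φ (a * h + h * star a) = φ a * φ h + φ h * star (φ a) := by
  have h := hφ.map_starLie (I • a) h hh
  rw [starLie_I_smul_s13, hφ.map_smul, hφ.map_smul, starLie_I_smul_s13] at h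
  exact smul_right_injective B I_ne_zero h

theorem map_add_star (hφ : IsStarLiePreserving φ) (a : A) : φ (a + star a) = φ a + star (φ a) := by
  simpa [hφ.map_one] using hφ.map_mul_add_mul_star a (.one A)

theorem map_star (hφ : IsStarLiePreserving φ) (a : A) : φ (star a) = star (φ a) := by
  have h₁ := hφ.map_sub_star (star a)
  have h₂ := hφ.map_add_star (star a)
  rw [star_star, ← neg_sub, hφ.map_neg, hφ.map_sub_star] at h₁
  rw [star_star, add_comm, hφ.map_add_star] at h₂
  linear_combination (norm := module) (-2⁻¹ : ℂ) • (h₁ + h₂)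

theorem isSelfAdjoint_map (hφ : IsStarLiePreserving φ) {h : A} (hh : IsSelfAdjoint h) :
    IsSelfAdjoint (φ h) := by
  rw [IsSelfAdjoint, ← hφ.map_star, hh.star_eq]

theorem map_mul_map_eq_zero (hφ : IsStarLiePreserving φ) {p q : A} (hp : IsSelfAdjoint p)
    (hq : IsSelfAdjoint q) (hpq : p * q = 0) : φ p * φ q = 0 := by
  have hqp : q * p = 0 := by simpa [hp.star_eq, hq.star_eq] using congr_arg star hpq
  have h₁ := hφ.map_mul_sub_mul_star p hq
  have h₂ := hφ.map_mul_add_mul_star p hq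
  simp only [hp.star_eq, (hφ.isSelfAdjoint_map hp).star_eq, hpq, hqp, sub_zero, add_zero,
    hφ.map_zero] at h₁ h₂
  linear_combination (norm := module) (-2⁻¹ : ℂ) • (h₁ + h₂)

theorem star_map_eq_of_offDiag {p a : A} (hφ : IsStarLiePreserving φ) (hp : IsSelfAdjoint p)
    (hpa : p * a = a) (hap : a * p = 0) : star (φ a) = (φ a + star (φ a)) * φ p := by
  have hpa' : p * star a = 0 := by simpa [hp.star_eq] using congr_arg star hap
  have hap' : star a * p = star a := by simpa [hp.star_eq] using congr_arg star hpa
  rw [add_mul]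
  have hh := IsSelfAdjoint.add_star_self a
  have h₁ := hφ.map_mul_sub_mul_star p hh
  have h₂ := hφ.map_mul_add_mul_star p hh
  simp only [hp.star_eq, (hφ.isSelfAdjoint_map hp).star_eq, mul_add, add_mul, hpa, hap, hpa', hap',
    add_zero, zero_add, hφ.map_sub_star, hφ.map_add_star] at h₁ h₂
  linear_combination (norm := module) (2⁻¹ : ℂ) • (h₂ - h₁)

theorem map_eq_map_mul_of_diag {q b : A} (hφ : IsStarLiePreserving φ) (hq : IsSelfAdjoint q)
    (hqb : q * b = b) (hbq : b * q = b) : φ b = φ q * φ b := by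
  have hQ := (hφ.isSelfAdjoint_map hq).star_eq
  have hsa : ∀ h, IsSelfAdjoint h → q * h = h → h * q = h → φ h = φ q * φ h := by
    intro h hh hqh hhq
    have h₁ := hφ.map_mul_sub_mul_star q hh
    have h₂ := hφ.map_mul_add_mul_star q hh
    rw [hq.star_eq, hqh, hhq, sub_self, hφ.map_zero, hQ] at h₁
    rw [hq.star_eq, hqh, hhq, ← two_smul ℂ, hφ.map_smul, hQ] at h₂
    linear_combination (norm := module) (2⁻¹ : ℂ) • (h₁ + h₂)
  have hqb' : q * star b = star b := by simpa [hq.star_eq] using congr_arg star hbq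
  have hbq' : star b * q = star b := by simpa [hq.star_eq] using congr_arg star hqb
  have hre := hsa _ (.add_star_self b) (by rw [mul_add, hqb, hqb']) (by rw [add_mul, hbq, hbq'])
  have him := hsa (I • (b - star b)) (by
    rw [IsSelfAdjoint, star_smul, star_sub, star_star, star_def, conj_I, neg_smul, ← smul_neg,
      neg_sub]) (by rw [mul_smul_comm, mul_sub, hqb, hqb'])
    (by rw [smul_mul_assoc, sub_mul, hbq, hbq'])
  rw [hφ.map_add_star] at hre
  rw [hφ.map_smul, hφ.map_sub_star, mul_smul_comm] at him
  have him' := smul_right_injective B I_ne_zero him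
  rw [mul_add] at hre
  rw [mul_sub] at him'
  linear_combination (norm := module) (2⁻¹ : ℂ) • (hre + him')

theorem map_mul_of_corner {p q a b : A} (hφ : IsStarLiePreserving φ) (hp : IsSelfAdjoint p)
    (hq : IsSelfAdjoint q) (hpq : p * q = 0) (hpa : p * a = a) (haq : a * q = a)
    (hqb : q * b = b) (hbq : b * q = b) : φ (a * b) = φ a * φ b := by
  have hqp : q * p = 0 := by simpa [hp.star_eq, hq.star_eq] using congr_arg star hpq
  have hap : a * p = 0 := by rw [← haq, mul_assoc, hqp, mul_zero]
  have hba : star b * a = 0 := by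
    rw [← hqb, ← hpa, star_mul, hq.star_eq, mul_assoc, ← mul_assoc q, hqp, zero_mul, mul_zero]
  have hab : star a * b = 0 := by
    rw [← hqb, ← hpa, star_mul, hp.star_eq, mul_assoc, ← mul_assoc p, hpq, zero_mul, mul_zero]
  have hvanish : star (φ a) * φ b = 0 := by
    rw [hφ.star_map_eq_of_offDiag hp hpa hap, hφ.map_eq_map_mul_of_diag hq hqb hbq, mul_assoc,
      ← mul_assoc (φ p), hφ.map_mul_map_eq_zero hp hq hpq, zero_mul, mul_zero]
  have hh := IsSelfAdjoint.add_star_self a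
  have h₁ := hφ.map_mul_sub_mul_star (star b) hh
  have h₂ := hφ.map_mul_add_mul_star (star b) hh
  have e₁ : star b * (a + star a) - (a + star a) * star (star b) = -(a * b - star (a * b)) := by
    simp only [star_star, star_mul, mul_add, add_mul, hba, hab]; abel
  have e₂ : star b * (a + star a) + (a + star a) * star (star b) = a * b + star (a * b) := by
    simp only [star_star, star_mul, mul_add, add_mul, hba, hab]; abel
  rw [e₁, hφ.map_neg, hφ.map_sub_star, hφ.map_star, star_star, hφ.map_add_star] at h₁
  rw [e₂, hφ.map_add_star, hφ.map_star, star_star, hφ.map_add_star] at h₂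
  simp only [mul_add, add_mul, hvanish] at h₁ h₂
  linear_combination (norm := module) (2⁻¹ : ℂ) • (h₂ - h₁)

end IsStarLiePreserving

theorem isStarLiePreserving_of_map_pn [StarModule ℂ A] [StarModule ℂ B] {φ : A → B} {n : ℕ}
    (hn : 2 ≤ n) (hone : φ 1 = 1) (hsmul : ∀ (c : ℂ) (a : A), φ (c • a) = c • φ a)
    (hpn : ∀ a b, φ (pn n a b 1) = pn n (φ a) (φ b) 1) : IsStarLiePreserving φ := by
  have hT : ∀ u v, φ (starLie u (v + star v)) = starLie (φ u) (φ v + star (φ v)) := by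
    intro u v
    simp only [← starLie_starLie_one]
    obtain rfl | ⟨m, rfl⟩ : n = 2 ∨ ∃ m, n = m + 3 := by
      rcases Nat.exists_eq_add_of_le hn with ⟨_ | m, rfl⟩
      exacts [.inl rfl, .inr ⟨m, by omega⟩]
    · simp only [pn_two] at hpn
      rw [hpn, hpn, hone]
    · have h := hpn u v
      rw [pn_add_three_one, pn_add_three_one, hsmul] at h
      exact smul_right_injective B (pow_ne_zero m two_ne_zero) h
  have hadd : ∀ z, φ (z + star z) = φ z + star (φ z) := by
    intro z
    have h := hT (I • z) ((2⁻¹ : ℂ) • 1)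
    rw [smul_two_inv_add_star (.one A), hsmul (2⁻¹), hone, smul_two_inv_add_star (.one B),
      starLie_I_smul_s13, hsmul, hsmul, starLie_I_smul_s13] at h
    simpa using smul_right_injective B I_ne_zero h
  refine ⟨hone, hsmul, fun u s hs => ?_⟩
  have h := hT u ((2⁻¹ : ℂ) • s)
  rwa [smul_two_inv_add_star hs, ← hadd, smul_two_inv_add_star hs] at h

end StarLiePreserving

variable {A A' : Type*}
  [NormedRing A] [StarRing A] [CStarRing A] [NormedAlgebra ℂ A]
  [CompleteSpace A] [StarModule ℂ A]
  [NormedRing A'] [StarRing A'] [CStarRing A'] [NormedAlgebra ℂ A']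
  [CompleteSpace A'] [StarModule ℂ A']

theorem stmt13_general
    (P₁ : A) (hP₁proj : P₁ * P₁ = P₁) (hP₁star : star P₁ = P₁)
    (P₂ : A) (hP₂ : P₂ = 1 - P₁)
    (n : ℕ) (hn : 2 ≤ n)
    (φ : A → A') (hunit : φ 1 = 1)
    (hsmul : ∀ (c : ℂ) (a : A), φ (c • a) = c • φ a)
    (hbullet : ∀ a b : A, ∀ Ξ ∈ ({P₁, P₂, 1} : Set A),
      φ (pn n a b Ξ) = pn n (φ a) (φ b) (φ Ξ))
    :
    ∀ Pj Pk : A, (Pj = P₁ ∧ Pk = P₂) ∨ (Pj = P₂ ∧ Pk = P₁) →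
      ∀ a b : A, (∃ x : A, a = Pj * x * Pk) → (∃ y : A, b = Pk * y * Pk) →
        φ (a * b) = φ a * φ b := by
  have hφ : IsStarLiePreserving φ :=
    isStarLiePreserving_of_map_pn hn hunit hsmul fun a b => by
      simpa [hunit] using hbullet a b 1 (by simp)
  have hP : IsStarProjection P₁ := ⟨hP₁proj, hP₁star⟩
  rintro Pj Pk hPjPk a b ⟨x, rfl⟩ ⟨y, rfl⟩
  obtain ⟨hj, hk, hjk⟩ : IsStarProjection Pj ∧ IsStarProjection Pk ∧ Pj * Pk = 0 := by
    subst hP₂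
    rcases hPjPk with ⟨rfl, rfl⟩ | ⟨rfl, rfl⟩
    exacts [⟨hP, hP.one_sub, hP.mul_one_sub_self⟩, ⟨hP.one_sub, hP, hP.one_sub_mul_self⟩]
  exact hφ.map_mul_of_corner hj.isSelfAdjoint hk.isSelfAdjoint hjk
    (by rw [← mul_assoc, ← mul_assoc, hj.isIdempotentElem.eq])
    (by rw [mul_assoc, hk.isIdempotentElem.eq])
    (by rw [← mul_assoc, ← mul_assoc, hk.isIdempotentElem.eq])
    (by rw [mul_assoc, hk.isIdempotentElem.eq])

theorem stmt13
    (P₁ : A) (hP₁proj : P₁ * P₁ = P₁) (hP₁star : star P₁ = P₁)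
    (hP₁ne0 : P₁ ≠ 0) (hP₁ne1 : P₁ ≠ 1)
    (P₂ : A) (hP₂ : P₂ = 1 - P₁)
    (hspade : ∀ Pj ∈ ({P₁, P₂} : Set A), ∀ X : A, (∀ Y : A, Pj * Y * X = 0) → X = 0)
    (n : ℕ) (hn : 2 ≤ n)
    (φ : A → A') (hbij : Function.Bijective φ) (hunit : φ 1 = 1)
    (hsmul : ∀ (c : ℂ) (a : A), φ (c • a) = c • φ a)
    (hbullet : ∀ a b : A, ∀ Ξ ∈ ({P₁, P₂, 1} : Set A),
      φ (pn n a b Ξ) = pn n (φ a) (φ b) (φ Ξ))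
    :
    ∀ Pj Pk : A, (Pj = P₁ ∧ Pk = P₂) ∨ (Pj = P₂ ∧ Pk = P₁) →
      ∀ a b : A, (∃ x : A, a = Pj * x * Pk) → (∃ y : A, b = Pk * y * Pk) →
        φ (a * b) = φ a * φ b :=
  stmt13_general P₁ hP₁proj hP₁star P₂ hP₂ n hn φ hunit hsmul hbullet
end
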